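/- Let F be a rotation-commuting localizable dynamics induced by a local rule f of radius r, and for each rotation sequence r̄ fix a conjugate r̄* with F(r̄ G) = r̄* F(G). Then for every graph G, every vertex u of G and every rotation sequence r̄, the graph (r̄*)⁻¹ f(r̄ Gᵤʳ) is a subgraph of F(G); consequently, for any two rotation sequences r̄₁, r̄₂ and any vertices u, v of G, the graphs (r̄₁*)⁻¹ f(r̄₁ Gᵤʳ) and (r̄₂*)⁻¹ f(r̄₂ Gᵥʳ) are consistent. -/

import Mathlib

open scoped Classical

/-- Ports are identified with `ZMod 3`; the fixed cyclic permutation `p_ports` is `p ↦ p + 1`. -/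
abbrev Port := ZMod 3

/-- A graph on the vertex-name type `α`: a vertex set together with a set of edges,
an edge being an unordered pair of (vertex, port) pairs. -/
structure PortGraph (α : Type) where
  verts : Set α
  edges : Set (Sym2 (α × Port))

namespace PortGraph

/-- Well-formedness: the vertex set is at most countable, edges are two-element subsets of
`V(G) × π`, and edges are pairwise non-intersecting (each pair `u:p` occurs in at most one edge). -/
def Wf {α : Type} (G : PortGraph α) : Prop :=
  G.verts.Countable ∧
  (∀ e ∈ G.edges, ¬ e.IsDiag ∧ ∀ x ∈ e, Prod.fst x ∈ G.verts) ∧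
  (∀ e₁ ∈ G.edges, ∀ e₂ ∈ G.edges, ∀ x : α × Port, x ∈ e₁ → x ∈ e₂ → e₁ = e₂)

/-- Apply a port-shift `c v` at every vertex `v`: the generalized form of a rotation. -/
def rotApply {α : Type} (c : α → Port) (G : PortGraph α) : PortGraph α :=
  ⟨G.verts, (Sym2.map fun x : α × Port => (x.1, x.2 + c x.1)) '' G.edges⟩

/-- The action of a rotation sequence (a finite multiset of vertex rotations): each occurrence of
`v` in `s` rotates the ports at `v` once by `p_ports = (· + 1)`. -/
noncomputable def rotSeq {α : Type} (s : Multiset α) (G : PortGraph α) : PortGraph α :=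
  rotApply (fun v => ((s.count v : ℕ) : Port)) G

/-- The single vertex rotation `r_u`. -/
noncomputable def rot {α : Type} (u : α) (G : PortGraph α) : PortGraph α := rotSeq {u} G

/-- Adjacency (regardless of ports). -/
def Adj {α : Type} (G : PortGraph α) (u v : α) : Prop :=
  ∃ p q : Port, s((u, p), (v, q)) ∈ G.edges

/-- `G.DistLe n u v` : the graph distance from `u` to `v` is at most `n`. -/
def DistLe {α : Type} (G : PortGraph α) : ℕ → α → α → Prop
  | 0, u, v => u = v
  | n + 1, u, v => u = v ∨ ∃ w, G.Adj u w ∧ G.DistLe n w v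

/-- The ball of radius `r` around `v`. -/
def ball {α : Type} (G : PortGraph α) (v : α) (r : ℕ) : Set α := {w | G.DistLe r v w}

/-- Induced subgraph on a set of vertices. -/
def induce {α : Type} (G : PortGraph α) (S : Set α) : PortGraph α :=
  ⟨G.verts ∩ S, {e ∈ G.edges | ∀ x ∈ e, Prod.fst x ∈ S}⟩

/-- Union of two graphs. -/
def union {α : Type} (G H : PortGraph α) : PortGraph α := ⟨G.verts ∪ H.verts, G.edges ∪ H.edges⟩

/-- Relabel the vertices of a graph along a map. -/
def map {α β : Type} (h : α → β) (G : PortGraph α) : PortGraph β :=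
  ⟨h '' G.verts, (Sym2.map (Prod.map h (id : Port → Port))) '' G.edges⟩

end PortGraph

/-- The inverse of a rotation sequence (using `r_u ^ 3 = id`). -/
noncomputable def invSeq {α : Type} (s : Multiset α) : Multiset α :=
  s.toFinset.val.bind fun u => Multiset.replicate ((3 - s.count u % 3) % 3) u

/-- Union of an indexed family of graphs. -/
def unionFam {α : Type} {ι : Sort*} (Gs : ι → PortGraph α) : PortGraph α :=
  ⟨⋃ i, (Gs i).verts, ⋃ i, (Gs i).edges⟩

/-- Two graphs are consistent when any two of their edges sharing an endpoint `u:k` are equal. -/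
def Consistent {α : Type} (G H : PortGraph α) : Prop :=
  ∀ e₁ ∈ G.edges, ∀ e₂ ∈ H.edges, ∀ x : α × Port, x ∈ e₁ → x ∈ e₂ → e₁ = e₂

/-- Subgraph relation. -/
def Subgraph {α : Type} (H G : PortGraph α) : Prop := H.verts ⊆ G.verts ∧ H.edges ⊆ G.edges

/-- A disk: a graph with a distinguished center. -/
structure Disk (α : Type) where
  graph : PortGraph α
  center : α

/-- The disk `G_v^r` of radius `r` centered at `v`: the subgraph induced by the vertices
at graph distance at most `r` from `v`, with center `v`. -/
def PortGraph.disk {α : Type} (G : PortGraph α) (v : α) (r : ℕ) : Disk α :=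
  ⟨G.induce (G.ball v r), v⟩

/-- Rotation sequences act on disks by acting on the underlying graph. -/
noncomputable def rotDisk {α : Type} (s : Multiset α) (D : Disk α) : Disk α := ⟨PortGraph.rotSeq s D.graph, D.center⟩

/-- Renaming of a disk along an isomorphism (bijective renaming of vertex names). -/
def Disk.rename {α : Type} (R : α ≃ α) (D : Disk α) : Disk α := ⟨D.graph.map R, R D.center⟩

/-- `D` is a disk of radius `r`, i.e. arises as `G_v^r` for some graph `G` and `v ∈ V(G)`. -/
def IsDisk {α : Type} (r : ℕ) (D : Disk α) : Prop :=
  ∃ G : PortGraph α, G.Wf ∧ ∃ v ∈ G.verts, D = G.disk v r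

/-- Vertex names produced by a local rule: sets of pairs `u.i` with `u` an old name and
`i ∈ {ε, 1, …, b}` a suffix (`ε` encoded as `0`). -/
abbrev NewName (α : Type) : Type := Set (α × ℕ)

/-- The action `R*` of an isomorphism on produced names: `R*({u.i, v.j, …}) = {R(u).i, R(v).j, …}`. -/
def starMap {α : Type} (R : α ≃ α) : NewName α → NewName α :=
  Set.image (Prod.map R (id : ℕ → ℕ))

/-- `f` is a local rule of radius `r`: it sends disks of radius `r` to graphs, (i) produced vertex
names are subsets of `V(D).{ε,1,…,b}` for some bound `b`, (ii) images of disks of a same graph are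
consistent, (iii) `f` commutes with isomorphisms. -/
def IsLocalRule {α : Type} (r : ℕ) (f : Disk α → PortGraph (NewName α)) : Prop :=
  (∀ D, IsDisk r D → (f D).Wf) ∧
  (∃ b : ℕ, ∀ D, IsDisk r D → ∀ w ∈ (f D).verts, ∀ x ∈ w, x.1 ∈ D.graph.verts ∧ x.2 ≤ b) ∧
  (∀ G : PortGraph α, G.Wf → ∀ u ∈ G.verts, ∀ v ∈ G.verts,
      Consistent (f (G.disk u r)) (f (G.disk v r))) ∧
  (∀ D, IsDisk r D → ∀ R : α ≃ α, f (D.rename R) = (f D).map (starMap R))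

/-- The localizable dynamics (CGD) induced by a local rule: `F(G) = ⋃_{v ∈ V(G)} f(G_v^r)`. -/
def inducedDyn {α : Type} (f : Disk α → PortGraph (NewName α)) (r : ℕ) (G : PortGraph α) :
    PortGraph (NewName α) :=
  ⟨⋃ v ∈ G.verts, (f (G.disk v r)).verts, ⋃ v ∈ G.verts, (f (G.disk v r)).edges⟩

/-- A function on graphs is rotation-commuting if every rotation sequence admits a conjugate. -/
def RotComm {α β : Type} (F : PortGraph α → PortGraph β) : Prop :=
  ∀ G : PortGraph α, G.Wf → ∀ s : Multiset α, ∃ t : Multiset β, F (PortGraph.rotSeq s G) = PortGraph.rotSeq t (F G)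

/-- A local rule of radius `r` is rotation-commuting if every rotation sequence on a disk admits a
conjugate. -/
def RotCommRule {α : Type} (r : ℕ) (f : Disk α → PortGraph (NewName α)) : Prop :=
  ∀ D : Disk α, IsDisk r D → ∀ s : Multiset α, ∃ t : Multiset (NewName α),
    f (rotDisk s D) = PortGraph.rotSeq t (f D)

/-- `w, vs` describe a path of length `n` in `G` (word `q₀p₀…` over `π²`, with `w i = (qᵢ, pᵢ)`). -/
def IsPath {α : Type} (G : PortGraph α) (n : ℕ) (w : ℕ → Port × Port) (vs : ℕ → α) : Prop :=
  ∀ i < n, s((vs i, (w i).1), (vs (i + 1), (w i).2)) ∈ G.edges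

/-- The path word `w` alternates at position `i`. -/
def AlternatesAt (w : ℕ → Port × Port) (i : ℕ) : Prop :=
  ((w i).2 = (w (i + 1)).1 + 1 ∧ (w (i + 1)).2 = (w (i + 2)).1 - 1) ∨
  ((w i).2 = (w (i + 1)).1 - 1 ∧ (w (i + 1)).2 = (w (i + 2)).1 + 1)

/-- A path word of length `n` is monotonous if it has no alternation. -/
def Monotonous (n : ℕ) (w : ℕ → Port × Port) : Prop :=
  ∀ i, i + 2 < n → ¬ AlternatesAt w i

/-- A graph is bounded-star with bound `s` if all its monotonous paths have length at most `s`. -/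
def BoundedStar {α : Type} (G : PortGraph α) (s : ℕ) : Prop :=
  ∀ n w vs, IsPath G n w vs → Monotonous n w → n ≤ s

/-- Generating relation for points of the interpretation `K(G)`:
`u:p ≡₀ v:q` iff `{u:(p+1), v:(q−1)} ∈ E(G)`. -/
def PointRel {α : Type} (G : PortGraph α) (x y : α × Port) : Prop :=
  s((x.1, x.2 + 1), (y.1, y.2 - 1)) ∈ G.edges

/-- Triangles `u` and `v` of `K(G)` share a point. -/
def SharesPoint {α : Type} (G : PortGraph α) (u v : α) : Prop :=
  ∃ p q : Port, Relation.EqvGen (PointRel G) (u, p) (v, q)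

/-- There is a monotonous path in `G` from `u` to `v`. -/
def MonPathFromTo {α : Type} (G : PortGraph α) (u v : α) : Prop :=
  ∃ n w vs, IsPath G n w vs ∧ Monotonous n w ∧ vs 0 = u ∧ vs n = v


/-
Locality makes `f(r̄ Gᵤʳ)` a piece of `F(r̄ G) = r̄* F(G)`; since rotations act on ports only,
undoing `r̄*` maps this inclusion to `(r̄*)⁻¹ f(r̄ Gᵤʳ) ⊆ F(G)`. Any two such graphs are then
subgraphs of `F(G)`, whose pieces `f(Gᵥʳ)` are pairwise consistent by the axioms of a local rule.
-/

namespace PortGraph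

variable {α : Type}

theorem rotApply_rotApply (c d : α → Port) (G : PortGraph α) :
    rotApply c (rotApply d G) = rotApply (fun v => d v + c v) G := by
  have hcomp : ((fun x : α × Port => (x.1, x.2 + c x.1)) ∘ fun x : α × Port => (x.1, x.2 + d x.1))
      = fun x : α × Port => (x.1, x.2 + (d x.1 + c x.1)) := by
    funext x
    simp [add_assoc]
  simp only [rotApply, ← Set.image_comp, ← Sym2.map_comp, hcomp]

theorem rotApply_zero (G : PortGraph α) : rotApply (fun _ => (0 : Port)) G = G := by
  have hid : (fun x : α × Port => (x.1, x.2 + (0 : Port))) = id := by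
    funext x
    simp
  simp only [rotApply, hid, Sym2.map_id, Set.image_id]

end PortGraph

section Rotations

variable {α : Type}

theorem count_invSeq (s : Multiset α) (v : α) :
    (invSeq s).count v = (3 - s.count v % 3) % 3 := by
  rw [invSeq, Multiset.count_bind]
  change ∑ u ∈ s.toFinset, (Multiset.replicate ((3 - s.count u % 3) % 3) u).count v = _
  by_cases hv : v ∈ s <;> simp [Multiset.count_replicate, hv]

theorem three_dvd_count_add_count_invSeq (s : Multiset α) (v : α) :
    3 ∣ s.count v + (invSeq s).count v := by
  rw [count_invSeq]
  omega

theorem rotSeq_invSeq_rotSeq (s : Multiset α) (G : PortGraph α) :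
    PortGraph.rotSeq (invSeq s) (PortGraph.rotSeq s G) = G := by
  have hzero : (fun v => ((s.count v : ℕ) : Port) + (((invSeq s).count v : ℕ) : Port))
      = fun _ => (0 : Port) := by
    funext v
    rw [← Nat.cast_add, ZMod.natCast_eq_zero_iff]
    exact three_dvd_count_add_count_invSeq s v
  rw [PortGraph.rotSeq, PortGraph.rotSeq, PortGraph.rotApply_rotApply, hzero,
    PortGraph.rotApply_zero]

theorem Subgraph.rotSeq (t : Multiset α) {H K : PortGraph α} (h : Subgraph H K) :
    Subgraph (PortGraph.rotSeq t H) (PortGraph.rotSeq t K) :=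
  ⟨h.1, Set.image_mono h.2⟩

theorem Subgraph.of_rotSeq_invSeq {t : Multiset α} {H K : PortGraph α}
    (h : Subgraph H (PortGraph.rotSeq t K)) : Subgraph (PortGraph.rotSeq (invSeq t) H) K := by
  simpa only [rotSeq_invSeq_rotSeq] using h.rotSeq (invSeq t)

theorem Consistent.mono {H₁ H₂ K₁ K₂ : PortGraph α} (h : Consistent K₁ K₂)
    (h₁ : Subgraph H₁ K₁) (h₂ : Subgraph H₂ K₂) : Consistent H₁ H₂ :=
  fun e₁ he₁ e₂ he₂ => h e₁ (h₁.2 he₁) e₂ (h₂.2 he₂)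

end Rotations

section InducedDynamics

variable {α : Type} {f : Disk α → PortGraph (NewName α)} {r : ℕ} {G : PortGraph α}

theorem subgraph_inducedDyn {u : α} (hu : u ∈ G.verts) :
    Subgraph (f (G.disk u r)) (inducedDyn f r G) :=
  ⟨fun _ hx => Set.mem_biUnion hu hx, fun _ he => Set.mem_biUnion hu he⟩

theorem consistent_inducedDyn
    (hcons : ∀ u ∈ G.verts, ∀ v ∈ G.verts, Consistent (f (G.disk u r)) (f (G.disk v r))) :
    Consistent (inducedDyn f r G) (inducedDyn f r G) := by
  intro e₁ he₁ e₂ he₂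
  simp only [inducedDyn, Set.mem_iUnion] at he₁ he₂
  obtain ⟨u, hu, he₁⟩ := he₁
  obtain ⟨v, hv, he₂⟩ := he₂
  exact hcons u hu v hv e₁ he₁ e₂ he₂

end InducedDynamics

theorem stmt2_general {α : Type} (r : ℕ) (f : Disk α → PortGraph (NewName α))
    (hf : IsLocalRule r f)
    (conj : PortGraph α → Multiset α → Multiset (NewName α))
    (hconj : ∀ G : PortGraph α, G.Wf → ∀ s : Multiset α,
      inducedDyn f r (PortGraph.rotSeq s G) = PortGraph.rotSeq (conj G s) (inducedDyn f r G))
    (G : PortGraph α) (hG : G.Wf) :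
    (∀ u ∈ G.verts, ∀ s : Multiset α,
      Subgraph (PortGraph.rotSeq (invSeq (conj G s)) (f ((PortGraph.rotSeq s G).disk u r)))
        (inducedDyn f r G)) ∧
    (∀ u ∈ G.verts, ∀ v ∈ G.verts, ∀ s₁ s₂ : Multiset α,
      Consistent (PortGraph.rotSeq (invSeq (conj G s₁)) (f ((PortGraph.rotSeq s₁ G).disk u r)))
        (PortGraph.rotSeq (invSeq (conj G s₂)) (f ((PortGraph.rotSeq s₂ G).disk v r)))) := by
  have hsub : ∀ u ∈ G.verts, ∀ s : Multiset α,
      Subgraph (PortGraph.rotSeq (invSeq (conj G s)) (f ((PortGraph.rotSeq s G).disk u r)))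
        (inducedDyn f r G) := by
    intro u hu s
    have hpiece := subgraph_inducedDyn (f := f) (r := r) (G := PortGraph.rotSeq s G) hu
    rw [hconj G hG s] at hpiece
    exact hpiece.of_rotSeq_invSeq
  refine ⟨hsub, fun u hu v hv s₁ s₂ => ?_⟩
  exact (consistent_inducedDyn (hf.2.2.1 G hG)).mono (hsub u hu s₁) (hsub v hv s₂)

/-- For a rotation-commuting localizable dynamics `F` induced by `f`, with fixed
conjugates `r̄*`, each `(r̄*)⁻¹ f(r̄ Gᵤʳ)` is a subgraph of `F(G)`; consequently any two such
graphs are consistent. -/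
theorem stmt2 {α : Type} [Uncountable α] (r : ℕ) (f : Disk α → PortGraph (NewName α))
    (hf : IsLocalRule r f)
    (conj : PortGraph α → Multiset α → Multiset (NewName α))
    (hconj : ∀ G : PortGraph α, G.Wf → ∀ s : Multiset α,
      inducedDyn f r (PortGraph.rotSeq s G) = PortGraph.rotSeq (conj G s) (inducedDyn f r G))
    (G : PortGraph α) (hG : G.Wf) :
    (∀ u ∈ G.verts, ∀ s : Multiset α,
      Subgraph (PortGraph.rotSeq (invSeq (conj G s)) (f ((PortGraph.rotSeq s G).disk u r)))
        (inducedDyn f r G)) ∧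
    (∀ u ∈ G.verts, ∀ v ∈ G.verts, ∀ s₁ s₂ : Multiset α,
      Consistent (PortGraph.rotSeq (invSeq (conj G s₁)) (f ((PortGraph.rotSeq s₁ G).disk u r)))
        (PortGraph.rotSeq (invSeq (conj G s₂)) (f ((PortGraph.rotSeq s₂ G).disk v r)))) :=
  stmt2_general r f hf conj hconj G hG
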